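/- arXiv:2002.09438 — 3 statements merged into one kernel-verified Lean document; each statement's English description precedes it below -/
import Mathlib

section
/- Under the setting of the LASSO basic inequality, suppose additionally max_{1≤j≤d} (2/n)|ε^⊤ X^{(j)}| ≤ λ₀ and λ ≥ 2λ₀. Let S₀ = supp(β⁰). Then (2/n)‖X(β̂ − β⁰)‖₂² + λ‖β̂_{S₀^c}‖₁ ≤ 3λ‖β̂_{S₀} − β⁰_{S₀}‖₁. -/
open Finset Matrix

open Classical in
/-- Refined LASSO basic inequality on the good event: if additionally
`max_j (2/n)|ε^⊤ X^{(j)}| ≤ λ₀` and `λ ≥ 2λ₀`, then with `S₀ = supp(β⁰)`,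
`(2/n)‖X(β̂ - β⁰)‖₂² + λ‖β̂_{S₀ᶜ}‖₁ ≤ 3λ‖β̂_{S₀} - β⁰_{S₀}‖₁`. -/
theorem lasso_basic_inequality_good_event
    (n d : ℕ) (hn : 0 < n)
    (X : Matrix (Fin n) (Fin d) ℝ) (β0 βhat : Fin d → ℝ) (ε Y : Fin n → ℝ)
    (lam lam0 : ℝ)
    (hY : Y = X.mulVec β0 + ε)
    (hmin : ∀ β : Fin d → ℝ,
      (1 / (n : ℝ)) * ∑ i, (Y i - X.mulVec βhat i) ^ 2 + lam * ∑ j, |βhat j|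
        ≤ (1 / (n : ℝ)) * ∑ i, (Y i - X.mulVec β i) ^ 2 + lam * ∑ j, |β j|)
    (hgood : ∀ j : Fin d, (2 / (n : ℝ)) * |∑ i, ε i * X i j| ≤ lam0)
    (hlam : lam ≥ 2 * lam0) :
    (2 / (n : ℝ)) * ∑ i, (X.mulVec (βhat - β0) i) ^ 2
        + lam * ∑ j ∈ Finset.univ.filter (fun j => β0 j = 0), |βhat j|
      ≤ 3 * lam * ∑ j ∈ Finset.univ.filter (fun j => β0 j ≠ 0), |βhat j - β0 j| := by
  classical
  rcases Nat.eq_zero_or_pos d with hd | hd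
  · subst hd
    simp [Matrix.mulVec, dotProduct]
  have hnpos : (0:ℝ) < n := by exact_mod_cast hn
  have hlam0 : 0 ≤ lam0 := le_trans (by positivity) (hgood ⟨0, hd⟩)
  have hlamnn : 0 ≤ lam := by linarith
  set Δ : Fin d → ℝ := βhat - β0 with hΔ
  set D : Fin n → ℝ := X.mulVec Δ with hD
  have hDeq : ∀ i, Y i - X.mulVec βhat i = ε i - D i := by
    intro i
    have h1 : D i = X.mulVec βhat i - X.mulVec β0 i := by
      simp [hD, hΔ, Matrix.mulVec_sub]
    simp [hY, h1]; ring
  -- sums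
  set Sε : ℝ := ∑ i, (ε i) ^ 2 with hSε
  set Sb : ℝ := ∑ i, ε i * D i with hSb
  set Sc : ℝ := ∑ i, (D i) ^ 2 with hSc
  have hexp : ∑ i, (Y i - X.mulVec βhat i) ^ 2 = Sε - 2 * Sb + Sc := by
    rw [hSε, hSb, hSc, Finset.mul_sum, ← Finset.sum_sub_distrib, ← Finset.sum_add_distrib]
    refine Finset.sum_congr rfl fun i _ => ?_
    rw [hDeq i]; ring
  have hε : ∑ i, (Y i - X.mulVec β0 i) ^ 2 = Sε := by
    refine Finset.sum_congr rfl fun i _ => ?_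
    simp [hY]
  have hbase := hmin β0
  rw [hexp, hε] at hbase
  -- key1 : (1/n) * Sc + lam * ∑|βhat| ≤ (2/n) * Sb + lam * ∑|β0|
  have key1 : (1 / (n:ℝ)) * Sc + lam * ∑ j, |βhat j|
      ≤ (2 / (n:ℝ)) * Sb + lam * ∑ j, |β0 j| := by
    have hr : (1 / (n:ℝ)) * (Sε - 2 * Sb + Sc)
        = (1 / (n:ℝ)) * Sε - (2 / (n:ℝ)) * Sb + (1 / (n:ℝ)) * Sc := by ring
    rw [hr] at hbase
    linarith
  -- step 3 : (2/n) * Sb ≤ lam0 * ∑ |Δ j|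
  have hswap : Sb = ∑ j, (∑ i, ε i * X i j) * Δ j := by
    rw [hSb]
    simp only [hD, Matrix.mulVec, dotProduct, Finset.mul_sum]
    rw [Finset.sum_comm]
    refine Finset.sum_congr rfl fun j _ => ?_
    rw [Finset.sum_mul]
    refine Finset.sum_congr rfl fun i _ => ?_
    ring
  have step3 : (2 / (n:ℝ)) * Sb ≤ lam0 * ∑ j, |Δ j| := by
    rw [hswap, Finset.mul_sum, Finset.mul_sum]
    refine Finset.sum_le_sum fun j _ => ?_
    have h1 : (2 / (n:ℝ)) * ((∑ i, ε i * X i j) * Δ j)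
        ≤ (2 / (n:ℝ)) * |∑ i, ε i * X i j| * |Δ j| := by
      rw [mul_assoc]
      refine mul_le_mul_of_nonneg_left ?_ (by positivity)
      calc (∑ i, ε i * X i j) * Δ j ≤ |(∑ i, ε i * X i j) * Δ j| := le_abs_self _
        _ = |∑ i, ε i * X i j| * |Δ j| := abs_mul _ _
    have h2 : (2 / (n:ℝ)) * |∑ i, ε i * X i j| * |Δ j| ≤ lam0 * |Δ j| :=
      mul_le_mul_of_nonneg_right (hgood j) (abs_nonneg _)
    linarith
  -- splitting sums
  set A : ℝ := ∑ j ∈ Finset.univ.filter (fun j => β0 j = 0), |βhat j| with hA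
  set B : ℝ := ∑ j ∈ Finset.univ.filter (fun j => β0 j ≠ 0), |βhat j| with hB
  set C : ℝ := ∑ j ∈ Finset.univ.filter (fun j => β0 j ≠ 0), |Δ j| with hC
  set C0 : ℝ := ∑ j ∈ Finset.univ.filter (fun j => β0 j ≠ 0), |β0 j| with hC0
  have hsplit : ∀ f : Fin d → ℝ, ∑ j, f j
      = ∑ j ∈ Finset.univ.filter (fun j => β0 j = 0), f j
        + ∑ j ∈ Finset.univ.filter (fun j => β0 j ≠ 0), f j := by
    intro f
    exact (Finset.sum_filter_add_sum_filter_not Finset.univ (fun j => β0 j = 0) f).symm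
  have hbh : ∑ j, |βhat j| = A + B := hsplit _
  have hb0 : ∑ j, |β0 j| = C0 := by
    rw [hsplit (fun j => |β0 j|), hC0]
    have : ∑ j ∈ Finset.univ.filter (fun j => β0 j = 0), |β0 j| = 0 := by
      refine Finset.sum_eq_zero fun j hj => ?_
      rw [Finset.mem_filter] at hj
      simp [hj.2]
    rw [this, zero_add]
  have hΔsum : ∑ j, |Δ j| = A + C := by
    rw [hsplit (fun j => |Δ j|), hC]
    congr 1
    refine Finset.sum_congr rfl fun j hj => ?_
    rw [Finset.mem_filter] at hj
    simp [hΔ, hj.2]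
  have hCAnn : 0 ≤ A + C := by
    have : (0:ℝ) ≤ ∑ j, |Δ j| := Finset.sum_nonneg fun j _ => abs_nonneg _
    linarith [hΔsum ▸ this]
  have htri : C0 ≤ C + B := by
    rw [hC0, hC, hB, ← Finset.sum_add_distrib]
    refine Finset.sum_le_sum fun j _ => ?_
    have : |β0 j| ≤ |Δ j| + |βhat j| := by
      have := abs_sub_abs_le_abs_sub (β0 j) (βhat j)
      have habs : |β0 j - βhat j| = |Δ j| := by
        rw [hΔ]; simp [abs_sub_comm]
      linarith [le_abs_self (β0 j), abs_nonneg (βhat j),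
        (abs_sub (β0 j) (βhat j))]
    linarith
  -- combine
  have hlamC0 : lam * C0 ≤ lam * (C + B) := mul_le_mul_of_nonneg_left htri hlamnn
  have hlam2 : lam0 * (A + C) ≤ (lam / 2) * (A + C) :=
    mul_le_mul_of_nonneg_right (by linarith) hCAnn
  rw [hbh, hb0] at key1
  rw [hΔsum] at step3
  have e1 : lam * (A + B) = lam * A + lam * B := by ring
  have e2 : lam / 2 * (A + C) = lam / 2 * A + lam / 2 * C := by ring
  have e3 : lam * (C + B) = lam * C + lam * B := by ring
  have e4 : (2 / (n:ℝ)) * Sc = 2 * ((1 / (n:ℝ)) * Sc) := by ring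
  have e5 : lam0 * (A + C) = lam0 * A + lam0 * C := by ring
  have hgoal : (2 / (n:ℝ)) * Sc + lam * A ≤ 3 * lam * C := by
    nlinarith [key1, step3, hlamC0, hlam2, e1, e2, e3, e4, e5]
  have hScg : ∑ i, (X.mulVec (βhat - β0) i) ^ 2 = Sc := by
    rw [hSc, hD, hΔ]
  have hCg : ∑ j ∈ Finset.univ.filter (fun j => β0 j ≠ 0), |βhat j - β0 j| = C := by
    rw [hC]
    refine Finset.sum_congr rfl fun j _ => ?_
    simp [hΔ]
  rw [hCg]
  exact hgoal
end

section
/- Under the good event (max_j (2/n)|ε^⊤X^{(j)}| ≤ λ₀) and λ ≥ 2λ₀, the LASSO error v = β̂ − β⁰ satisfies the cone condition ‖v_{S₀^c}‖₁ ≤ 3‖v_{S₀}‖₁, where S₀ = supp(β⁰). -/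
/-!
Comparing the LASSO objective at `β̂` with its value at `β⁰` gives the basic inequality
`(1/n)‖Xv‖² ≤ (2/n) εᵀXv + λ(‖β⁰‖₁ - ‖β̂‖₁)`. On the good event the noise term is at most
`(λ/2)‖v‖₁`, and since `β⁰` vanishes off `S₀` the penalty difference is at most
`‖v_{S₀}‖₁ - ‖v_{S₀ᶜ}‖₁`. Dropping the nonnegative quadratic term leaves
`0 ≤ (λ/2)(‖v_{S₀}‖₁ + ‖v_{S₀ᶜ}‖₁) + λ(‖v_{S₀}‖₁ - ‖v_{S₀ᶜ}‖₁)`, i.e. the cone condition.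
-/

open Finset Matrix

section

variable {ι κ : Type*} [Fintype ι] [Fintype κ]

theorem dotProduct_le_mul_sum_abs {g : κ → ℝ} {c : ℝ} (hg : ∀ j, |g j| ≤ c) (v : κ → ℝ) :
    g ⬝ᵥ v ≤ c * ∑ j, |v j| := by
  rw [dotProduct, mul_sum]
  refine sum_le_sum fun j _ => ?_
  calc g j * v j ≤ |g j| * |v j| := by rw [← abs_mul]; exact le_abs_self _
    _ ≤ c * |v j| := mul_le_mul_of_nonneg_right (hg j) (abs_nonneg _)

theorem sum_sq_sub_eq (a b : ι → ℝ) :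
    ∑ i, (a i - b i) ^ 2 = ∑ i, a i ^ 2 - 2 * (a ⬝ᵥ b) + ∑ i, b i ^ 2 := by
  rw [dotProduct, mul_sum, ← sum_sub_distrib, ← sum_add_distrib]
  exact sum_congr rfl fun i _ => by ring

theorem lasso_basic_inequality {X : Matrix ι κ ℝ} {β0 βhat : κ → ℝ} {ε Y : ι → ℝ} {c lam : ℝ}
    (hY : Y = X *ᵥ β0 + ε)
    (hmin : c * ∑ i, (Y i - (X *ᵥ βhat) i) ^ 2 + lam * ∑ j, |βhat j|
      ≤ c * ∑ i, (Y i - (X *ᵥ β0) i) ^ 2 + lam * ∑ j, |β0 j|) :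
    c * ∑ i, (X *ᵥ (βhat - β0)) i ^ 2
      ≤ 2 * c * (ε ⬝ᵥ X *ᵥ (βhat - β0)) + lam * (∑ j, |β0 j| - ∑ j, |βhat j|) := by
  have hres : ∀ i, Y i - (X *ᵥ βhat) i = ε i - (X *ᵥ (βhat - β0)) i := fun i => by
    simp only [hY, mulVec_sub, Pi.add_apply, Pi.sub_apply]; ring
  have hnoise : ∀ i, Y i - (X *ᵥ β0) i = ε i := fun i => by
    simp only [hY, Pi.add_apply]; ring
  simp only [hres, hnoise, sum_sq_sub_eq] at hmin
  linarith

open Classical in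
theorem sum_abs_sub_sum_abs_le (β β' : κ → ℝ) :
    ∑ j, |β j| - ∑ j, |β' j|
      ≤ ∑ j ∈ univ.filter (fun j => β j ≠ 0), |β' j - β j|
        - ∑ j ∈ univ.filter (fun j => β j = 0), |β' j - β j| := by
  rw [← sum_sub_distrib, ← sum_filter_add_sum_filter_not univ (fun j => β j = 0)]
  have hoff : ∑ j ∈ univ.filter (fun j => β j = 0), (|β j| - |β' j|)
      = -∑ j ∈ univ.filter (fun j => β j = 0), |β' j - β j| := by
    rw [← sum_neg_distrib]
    refine sum_congr rfl fun j hj => ?_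
    simp [(mem_filter.mp hj).2]
  have hon : ∑ j ∈ univ.filter (fun j => β j ≠ 0), (|β j| - |β' j|)
      ≤ ∑ j ∈ univ.filter (fun j => β j ≠ 0), |β' j - β j| :=
    sum_le_sum fun j _ => abs_sub_comm (β' j) (β j) ▸ abs_sub_abs_le_abs_sub _ _
  linarith

end

open Classical in
theorem lasso_cone_condition_general
    (n d : ℕ)
    (X : Matrix (Fin n) (Fin d) ℝ) (β0 βhat : Fin d → ℝ) (ε Y : Fin n → ℝ)
    (lam lam0 : ℝ) (hlam_pos : 0 < lam)
    (hY : Y = X.mulVec β0 + ε)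
    (hmin : ∀ β : Fin d → ℝ,
      (1 / (n : ℝ)) * ∑ i, (Y i - X.mulVec βhat i) ^ 2 + lam * ∑ j, |βhat j|
        ≤ (1 / (n : ℝ)) * ∑ i, (Y i - X.mulVec β i) ^ 2 + lam * ∑ j, |β j|)
    (hgood : ∀ j : Fin d, (2 / (n : ℝ)) * |∑ i, ε i * X i j| ≤ lam0)
    (hlam : lam ≥ 2 * lam0) :
    ∑ j ∈ Finset.univ.filter (fun j => β0 j = 0), |βhat j - β0 j|
      ≤ 3 * ∑ j ∈ Finset.univ.filter (fun j => β0 j ≠ 0), |βhat j - β0 j| := by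
  set v := βhat - β0
  have hbasic := lasso_basic_inequality hY (hmin β0)
  have hquad : 0 ≤ 1 / (n : ℝ) * ∑ i, (X *ᵥ v) i ^ 2 := by positivity
  have hnoise : 2 * (1 / (n : ℝ)) * (ε ⬝ᵥ X *ᵥ v) ≤ lam / 2 * ∑ j, |v j| := by
    rw [dotProduct_mulVec, mul_one_div, ← smul_eq_mul, ← smul_dotProduct]
    refine dotProduct_le_mul_sum_abs (fun j => ?_) v
    rw [Pi.smul_apply, smul_eq_mul, abs_mul, abs_of_nonneg (by positivity)]
    exact (hgood j).trans (by linarith)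
  have hsplit : ∑ j, |v j| = ∑ j ∈ univ.filter (fun j => β0 j = 0), |v j|
      + ∑ j ∈ univ.filter (fun j => β0 j ≠ 0), |v j| :=
    (sum_filter_add_sum_filter_not univ _ _).symm
  have hpen := mul_le_mul_of_nonneg_left (sum_abs_sub_sum_abs_le β0 βhat) hlam_pos.le
  refine le_of_mul_le_mul_left ?_ hlam_pos
  simp only [v, Pi.sub_apply] at hnoise hsplit
  rw [hsplit] at hnoise
  linarith

open Classical in
/-- Cone condition for the LASSO error: on the good event and for `λ ≥ 2λ₀ > 0`,
the error `v = β̂ - β⁰` satisfies `‖v_{S₀ᶜ}‖₁ ≤ 3‖v_{S₀}‖₁` with `S₀ = supp(β⁰)`. -/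
theorem lasso_cone_condition
    (n d : ℕ) (hn : 0 < n)
    (X : Matrix (Fin n) (Fin d) ℝ) (β0 βhat : Fin d → ℝ) (ε Y : Fin n → ℝ)
    (lam lam0 : ℝ) (hlam_pos : 0 < lam)
    (hY : Y = X.mulVec β0 + ε)
    (hmin : ∀ β : Fin d → ℝ,
      (1 / (n : ℝ)) * ∑ i, (Y i - X.mulVec βhat i) ^ 2 + lam * ∑ j, |βhat j|
        ≤ (1 / (n : ℝ)) * ∑ i, (Y i - X.mulVec β i) ^ 2 + lam * ∑ j, |β j|)
    (hgood : ∀ j : Fin d, (2 / (n : ℝ)) * |∑ i, ε i * X i j| ≤ lam0)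
    (hlam : lam ≥ 2 * lam0) :
    ∑ j ∈ Finset.univ.filter (fun j => β0 j = 0), |βhat j - β0 j|
      ≤ 3 * ∑ j ∈ Finset.univ.filter (fun j => β0 j ≠ 0), |βhat j - β0 j| :=
  lasso_cone_condition_general n d X β0 βhat ε Y lam lam0 hlam_pos hY hmin hgood hlam
end

section
/- Suppose: (a) the good event max_j (2/n)|ε^⊤X^{(j)}| ≤ λ₀ holds with λ ≥ 2λ₀, (b) β̂ is the LASSO minimizer of (1/n)‖Y−Xβ‖₂² + λ‖β‖₁ with Y = Xβ⁰ + ε, and (c) Σ̂ = (1/n)X^⊤X satisfies the compatibility condition with support S₀ = supp(β⁰), |S₀| = s₀, and constant φ₀. Then (1/n)‖X(β̂−β⁰)‖₂² + λ‖β̂−β⁰‖₁ ≤ 4 s₀ λ² / φ₀². -/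
open Finset Matrix

set_option maxHeartbeats 1000000 in
open Classical in
/-- Static oracle inequality for LASSO: on the good event, with `λ ≥ 2λ₀`, if the
LASSO minimizer `β̂` and `Σ̂ = (1/n)X^⊤X` satisfying the compatibility condition
with support `S₀ = supp(β⁰)`, `|S₀| = s₀`, and constant `φ₀`, then
`(1/n)‖X(β̂-β⁰)‖₂² + λ‖β̂-β⁰‖₁ ≤ 4 s₀ λ² / φ₀²`. -/
theorem lasso_oracle_inequality
    (n d : ℕ) (hn : 0 < n)
    (X : Matrix (Fin n) (Fin d) ℝ) (β0 βhat : Fin d → ℝ) (ε Y : Fin n → ℝ)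
    (lam lam0 φ0 : ℝ) (hφ0 : 0 < φ0) (hlam_pos : 0 < lam)
    (hY : Y = X.mulVec β0 + ε)
    (hmin : ∀ β : Fin d → ℝ,
      (1 / (n : ℝ)) * ∑ i, (Y i - X.mulVec βhat i) ^ 2 + lam * ∑ j, |βhat j|
        ≤ (1 / (n : ℝ)) * ∑ i, (Y i - X.mulVec β i) ^ 2 + lam * ∑ j, |β j|)
    (hgood : ∀ j : Fin d, (2 / (n : ℝ)) * |∑ i, ε i * X i j| ≤ lam0)
    (hlam : lam ≥ 2 * lam0)
    (hcompat : ∀ v : Fin d → ℝ,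
      (∑ j ∈ Finset.univ.filter (fun j => β0 j = 0), |v j|
          ≤ 3 * ∑ j ∈ Finset.univ.filter (fun j => β0 j ≠ 0), |v j|) →
      (∑ j ∈ Finset.univ.filter (fun j => β0 j ≠ 0), |v j|) ^ 2
        ≤ ((Finset.univ.filter (fun j => β0 j ≠ 0)).card : ℝ)
            * ((1 / (n : ℝ)) * ∑ i, (X.mulVec v i) ^ 2) / φ0 ^ 2) :
    (1 / (n : ℝ)) * ∑ i, (X.mulVec (βhat - β0) i) ^ 2
        + lam * ∑ j, |βhat j - β0 j|
      ≤ 4 * ((Finset.univ.filter (fun j => β0 j ≠ 0)).card : ℝ) * lam ^ 2 / φ0 ^ 2 := by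
  classical
  have hn' : (0:ℝ) < n := by exact_mod_cast hn
  set v : Fin d → ℝ := βhat - β0 with hv
  have hvj : ∀ j, βhat j - β0 j = v j := fun j => rfl
  set S : Finset (Fin d) := Finset.univ.filter (fun j => β0 j ≠ 0) with hS
  set Sc : Finset (Fin d) := Finset.univ.filter (fun j => β0 j = 0) with hSc
  set Q : ℝ := (1/(n:ℝ)) * ∑ i, (X.mulVec v i)^2 with hQ
  have hQ0 : 0 ≤ Q := by
    apply mul_nonneg (by positivity) (Finset.sum_nonneg fun i _ => sq_nonneg _)
  -- residual identity
  have hres : ∀ i, Y i - X.mulVec βhat i = ε i - X.mulVec v i := by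
    intro i
    have h : X.mulVec v i = X.mulVec βhat i - X.mulVec β0 i := by
      rw [hv, Matrix.mulVec_sub]; rfl
    rw [hY]; simp [h, Pi.add_apply]; ring
  have hYb0 : ∀ i, Y i - X.mulVec β0 i = ε i := by
    intro i; rw [hY]; simp [Pi.add_apply]
  -- basic inequality
  set T : ℝ := ∑ i, ε i * X.mulVec v i with hT
  have hbasic : Q + lam * ∑ j, |βhat j|
      ≤ (2/(n:ℝ)) * T + lam * ∑ j, |β0 j| := by
    have h := hmin β0
    have hexp : ∑ i, (Y i - X.mulVec βhat i)^2
        = ∑ i, (ε i)^2 - 2 * T + ∑ i, (X.mulVec v i)^2 := by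
      have e : ∀ i : Fin n, (Y i - X.mulVec βhat i)^2
          = (ε i)^2 - 2*(ε i * X.mulVec v i) + (X.mulVec v i)^2 := by
        intro i; rw [hres i]; ring
      rw [Finset.sum_congr rfl (fun i _ => e i), Finset.sum_add_distrib,
        Finset.sum_sub_distrib, ← Finset.mul_sum, hT]
    have hexp0 : ∑ i, (Y i - X.mulVec β0 i)^2 = ∑ i, (ε i)^2 := by
      exact Finset.sum_congr rfl (fun i _ => by rw [hYb0 i])
    rw [hexp, hexp0] at h
    have hkey : (1/(n:ℝ)) * (∑ i, (ε i)^2 - 2 * T + ∑ i, (X.mulVec v i)^2)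
        = (1/(n:ℝ)) * ∑ i, (ε i)^2 - (2/(n:ℝ)) * T + Q := by
      rw [hQ]; ring
    rw [hkey] at h
    linarith
  -- bound on the cross term
  have hTbound : (2/(n:ℝ)) * T ≤ (lam/2) * ∑ j, |v j| := by
    have hswap : T = ∑ j, v j * ∑ i, ε i * X i j := by
      rw [hT]
      simp_rw [Matrix.mulVec, dotProduct, Finset.mul_sum]
      rw [Finset.sum_comm]
      exact Finset.sum_congr rfl fun j _ => Finset.sum_congr rfl fun i _ => by ring
    rw [hswap, Finset.mul_sum, Finset.mul_sum]
    apply Finset.sum_le_sum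
    intro j _
    have h1 : 2/(n:ℝ) * (v j * ∑ i, ε i * X i j)
        ≤ |v j| * (2/(n:ℝ) * |∑ i, ε i * X i j|) := by
      calc 2/(n:ℝ) * (v j * ∑ i, ε i * X i j)
          ≤ |2/(n:ℝ) * (v j * ∑ i, ε i * X i j)| := le_abs_self _
        _ = |v j| * (2/(n:ℝ) * |∑ i, ε i * X i j|) := by
            rw [abs_mul, abs_mul, abs_of_nonneg (by positivity : (0:ℝ) ≤ 2/(n:ℝ))]
            ring
    have h2 : |v j| * (2/(n:ℝ) * |∑ i, ε i * X i j|) ≤ |v j| * (lam/2) := by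
      apply mul_le_mul_of_nonneg_left _ (abs_nonneg _)
      calc 2/(n:ℝ) * |∑ i, ε i * X i j| ≤ lam0 := hgood j
        _ ≤ lam/2 := by linarith
    calc 2/(n:ℝ) * (v j * ∑ i, ε i * X i j) ≤ |v j| * (lam/2) := le_trans h1 h2
      _ = lam/2 * |v j| := by ring
  -- sum splitting
  have hsplit : ∀ f : Fin d → ℝ, ∑ j, f j = ∑ j ∈ S, f j + ∑ j ∈ Sc, f j := by
    intro f
    rw [← Finset.sum_filter_add_sum_filter_not Finset.univ (fun j => β0 j ≠ 0) f]
    congr 1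
    apply Finset.sum_congr _ (fun _ _ => rfl)
    rw [hSc]; ext j; simp
  set tS : ℝ := ∑ j ∈ S, |v j| with htS
  set tC : ℝ := ∑ j ∈ Sc, |v j| with htC
  have htS0 : 0 ≤ tS := Finset.sum_nonneg fun j _ => abs_nonneg _
  have htC0 : 0 ≤ tC := Finset.sum_nonneg fun j _ => abs_nonneg _
  have hbhat_split : ∑ j, |βhat j| = ∑ j ∈ S, |βhat j| + tC := by
    rw [hsplit (fun j => |βhat j|), htC]
    congr 1
    apply Finset.sum_congr rfl
    intro j hj
    have hj0 : β0 j = 0 := by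
      rw [hSc] at hj; exact (Finset.mem_filter.mp hj).2
    have : v j = βhat j := by rw [← hvj j, hj0]; ring
    rw [this]
  have hb0_split : ∑ j, |β0 j| = ∑ j ∈ S, |β0 j| := by
    rw [hsplit (fun j => |β0 j|)]
    have : ∑ j ∈ Sc, |β0 j| = 0 := by
      apply Finset.sum_eq_zero
      intro j hj
      have hj0 : β0 j = 0 := by rw [hSc] at hj; exact (Finset.mem_filter.mp hj).2
      rw [hj0, abs_zero]
    rw [this, add_zero]
  have htri : ∑ j ∈ S, |β0 j| ≤ ∑ j ∈ S, |βhat j| + tS := by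
    rw [htS, ← Finset.sum_add_distrib]
    apply Finset.sum_le_sum
    intro j _
    have h1 : |β0 j| - |βhat j| ≤ |β0 j - βhat j| := abs_sub_abs_le_abs_sub _ _
    have h2 : |β0 j - βhat j| = |v j| := by rw [← hvj j, abs_sub_comm]
    linarith
  -- key inequality: 2Q + λ tC ≤ 3 λ tS
  have hv_split : ∑ j, |v j| = tS + tC := hsplit (fun j => |v j|)
  have hlam_tri : lam * ∑ j ∈ S, |β0 j| ≤ lam * (∑ j ∈ S, |βhat j| + tS) :=
    mul_le_mul_of_nonneg_left htri (le_of_lt hlam_pos)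
  have hkey : 2*Q + lam*tC ≤ 3*lam*tS := by
    rw [hbhat_split, hb0_split] at hbasic
    rw [hv_split] at hTbound
    nlinarith [hbasic, hTbound, hlam_tri]
  -- cone condition
  have hcone : tC ≤ 3 * tS :=
    le_of_mul_le_mul_left (by nlinarith) hlam_pos
  -- compatibility
  have hcompat' := hcompat v (by rw [← htS, ← htC]; exact hcone)
  rw [← htS, ← hQ] at hcompat'
  set c : ℝ := (S.card : ℝ) with hc
  have hc0 : 0 ≤ c := by rw [hc]; positivity
  have hb : (0:ℝ) < φ0^2 := by positivity
  clear_value v S Sc Q T tS tC c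
  have hcompat2 : tS^2 * φ0^2 ≤ c * Q := by
    rw [div_eq_mul_inv] at hcompat'
    calc tS^2 * φ0^2 ≤ (c*Q*(φ0^2)⁻¹) * φ0^2 :=
          mul_le_mul_of_nonneg_right hcompat' (le_of_lt hb)
      _ = c * Q := by field_simp
  -- 4 λ tS φ0² ≤ Q φ0² + 4 c λ²
  have hfin : 4*lam*tS*φ0^2 ≤ Q*φ0^2 + 4*c*lam^2 := by
    have hsq : (4*lam*tS*φ0^2)^2 ≤ (Q*φ0^2 + 4*c*lam^2)^2 := by
      linarith [sq_nonneg (Q*φ0^2 - 4*c*lam^2),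
        mul_le_mul_of_nonneg_left hcompat2 (by positivity : (0:ℝ) ≤ 16*lam^2*φ0^2)]
    have hA : (0:ℝ) ≤ 4*lam*tS*φ0^2 := by positivity
    have hB : (0:ℝ) ≤ Q*φ0^2 + 4*c*lam^2 := by positivity
    have h := Real.sqrt_le_sqrt hsq
    rwa [Real.sqrt_sq hA, Real.sqrt_sq hB] at h
  -- conclude
  simp_rw [hvj]
  rw [hv_split]
  rw [← sub_nonneg]
  have hgoal : 4*c*lam^2/φ0^2 - (Q + lam*(tS+tC))
      = (4*c*lam^2 - (Q + lam*(tS+tC))*φ0^2) * (φ0^2)⁻¹ := by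
    field_simp
  rw [hgoal]
  apply mul_nonneg _ (by positivity)
  have hL : Q + lam*(tS+tC) ≤ 4*lam*tS - Q := by linarith [hkey]
  have hLs : (Q + lam*(tS+tC))*φ0^2 ≤ (4*lam*tS - Q)*φ0^2 :=
    mul_le_mul_of_nonneg_right hL hb.le
  nlinarith [hLs, hfin, mul_nonneg hQ0 hb.le]
end
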